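/- arXiv:2203.13666 — 8 statements merged into one kernel-verified Lean document; each statement's English description precedes it below -/
import Mathlib

section
/- Let 0 ≤ b ≤ 1 and -1/(1+b)² ≤ a ≤ 1/(1+b). Then for all u, v ∈ [0,1], the copula density c(u,v;a,b) = 1 + a·f(u,b)·f(v,b) is nonnegative, where f(u,b) = 3bu² + 2u(1-b) - 1. -/
theorem density_nonneg (a b : ℝ) (hb0 : 0 ≤ b) (hb1 : b ≤ 1)
    (ha1 : -1 / (1 + b) ^ 2 ≤ a) (ha2 : a ≤ 1 / (1 + b)) :
    ∀ u ∈ Set.Icc (0:ℝ) 1, ∀ v ∈ Set.Icc (0:ℝ) 1,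
      0 ≤ 1 + a * (3 * b * u ^ 2 + 2 * u * (1 - b) - 1) *
        (3 * b * v ^ 2 + 2 * v * (1 - b) - 1) := by
  intro u hu v hv
  obtain ⟨hu0, hu1⟩ := hu
  obtain ⟨hv0, hv1⟩ := hv
  have hbpos : (0:ℝ) < 1 + b := by linarith
  set fu := 3 * b * u ^ 2 + 2 * u * (1 - b) - 1 with hfu
  set fv := 3 * b * v ^ 2 + 2 * v * (1 - b) - 1 with hfv
  have hfu1 : -1 ≤ fu := by nlinarith [mul_nonneg hu0 (mul_nonneg hb0 hu0)]
  have hfu2 : fu ≤ 1 + b := by nlinarith [mul_nonneg (mul_nonneg hb0 (by linarith : (0:ℝ) ≤ 1 - u)) (by linarith : (0:ℝ) ≤ 1 + 3 * u)]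
  have hfv1 : -1 ≤ fv := by nlinarith [mul_nonneg hv0 (mul_nonneg hb0 hv0)]
  have hfv2 : fv ≤ 1 + b := by nlinarith [mul_nonneg (mul_nonneg hb0 (by linarith : (0:ℝ) ≤ 1 - v)) (by linarith : (0:ℝ) ≤ 1 + 3 * v)]
  have ha2' : a * (1 + b) ≤ 1 := (le_div_iff₀ hbpos).mp ha2
  have ha1' : -1 ≤ a * (1 + b) ^ 2 := (div_le_iff₀ (by positivity : (0:ℝ) < (1 + b) ^ 2)).mp ha1
  rcases le_or_gt 0 a with hA | hA
  · rcases le_or_gt 0 fu with h | h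
    · nlinarith [mul_nonneg hA h]
    · nlinarith [mul_nonneg hA (le_of_lt (neg_pos.mpr h))]
  · nlinarith [mul_nonneg (by linarith : (0:ℝ) ≤ 1 + b - fu) (by linarith : (0:ℝ) ≤ 1 + b - fv),
      mul_nonneg (by linarith : (0:ℝ) ≤ fu + 1) (by linarith : (0:ℝ) ≤ fv + 1),
      mul_nonneg (by linarith : (0:ℝ) ≤ -a) (by linarith : (0:ℝ) ≤ 1 + b - fu),
      mul_nonneg (by linarith : (0:ℝ) ≤ -a) (by linarith : (0:ℝ) ≤ 1 + b - fv),
      mul_nonneg (by linarith : (0:ℝ) ≤ -a) (by linarith : (0:ℝ) ≤ fu + 1)]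
end

section
/- If -2 ≤ b ≤ 0 and -1 ≤ a ≤ 0, then for all u, v ∈ [0,1], C(u,v;a,b) = uv[1 + a(1-u)(1-v)(1+bu)(1+bv)] ≤ 1. -/
set_option maxHeartbeats 1000000 in
theorem copula_le_one (a b : ℝ) (hb1 : -2 ≤ b) (hb2 : b ≤ 0)
    (ha1 : -1 ≤ a) (ha2 : a ≤ 0) :
    ∀ u ∈ Set.Icc (0:ℝ) 1, ∀ v ∈ Set.Icc (0:ℝ) 1,
      u * v * (1 + a * (1 - u) * (1 - v) * (1 + b * u) * (1 + b * v)) ≤ 1 := by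
  rintro u ⟨hu0, hu1⟩ v ⟨hv0, hv1⟩
  have hu1' : 0 ≤ 1 - u := by linarith
  have hv1' : 0 ≤ 1 - v := by linarith
  have huv : u * v ≤ 1 := by nlinarith
  rcases le_or_gt 0 (1 + b*u) with hbu | hbu <;> rcases le_or_gt 0 (1 + b*v) with hbv | hbv
  · have hP : 0 ≤ (1-u)*(1-v)*((1+b*u)*(1+b*v)) :=
      mul_nonneg (mul_nonneg hu1' hv1') (mul_nonneg hbu hbv)
    nlinarith [mul_nonneg hu0 hv0, mul_nonpos_of_nonpos_of_nonneg ha2 hP,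
      mul_nonneg (mul_nonneg hu0 hv0) (mul_nonneg (neg_nonneg.2 ha2) hP)]
  · -- 1+bu ≥ 0, 1+bv < 0
    have h2v : 1 ≤ 2*v := by nlinarith
    have hA : -(1+b*v) ≤ 2*v - 1 := by nlinarith
    have hT : a*(1-u)*(1-v)*(1+b*u)*(1+b*v) ≤ (1-u)*(1-v)*(2*v-1) := by
      nlinarith [mul_nonneg (mul_nonneg hu1' hv1') (mul_nonneg hbu (by linarith : (0:ℝ) ≤ -(1+b*v))),
        mul_nonneg (mul_nonneg hu1' hv1') (mul_nonneg hbu (by linarith : (0:ℝ) ≤ 2*v-1+(1+b*v))),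
        mul_nonneg (mul_nonneg hu1' hv1') (mul_nonneg (by nlinarith [mul_nonneg (neg_nonneg.2 hb2) hu0] : (0:ℝ) ≤ 1-(1+b*u)) (by linarith : (0:ℝ) ≤ 2*v-1)),
        mul_nonneg (mul_nonneg (neg_nonneg.2 ha2) (mul_nonneg hu1' hv1')) (mul_nonneg hbu (by linarith : (0:ℝ) ≤ -(1+b*v))),
        mul_nonneg (mul_nonneg (by linarith : (0:ℝ) ≤ 1+a) (mul_nonneg hu1' hv1')) (mul_nonneg hbu (by linarith : (0:ℝ) ≤ -(1+b*v)))]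
    have hkey : u*v*((1-u)*(1-v)*(2*v-1)) ≤ 1 - u*v := by
      nlinarith [mul_nonneg (mul_nonneg (mul_nonneg hu0 hv0) hu1') (by linarith : (0:ℝ) ≤ 2*v-1),
        mul_nonneg (mul_nonneg (mul_nonneg hu0 hv0) hu1') (mul_nonneg hv1' (by linarith : (0:ℝ) ≤ 2*v-1)),
        mul_nonneg hv1' (mul_nonneg hu0 (by linarith : (0:ℝ) ≤ 2*v-1))]
    nlinarith [mul_nonneg hu0 hv0, mul_le_mul_of_nonneg_left hT (mul_nonneg hu0 hv0)]
  · -- 1+bu < 0, 1+bv ≥ 0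
    have h2u : 1 ≤ 2*u := by nlinarith
    have hA : -(1+b*u) ≤ 2*u - 1 := by nlinarith
    have hT : a*(1-u)*(1-v)*(1+b*u)*(1+b*v) ≤ (1-u)*(1-v)*(2*u-1) := by
      nlinarith [mul_nonneg (mul_nonneg hu1' hv1') (mul_nonneg hbv (by linarith : (0:ℝ) ≤ -(1+b*u))),
        mul_nonneg (mul_nonneg hu1' hv1') (mul_nonneg hbv (by linarith : (0:ℝ) ≤ 2*u-1+(1+b*u))),
        mul_nonneg (mul_nonneg hu1' hv1') (mul_nonneg (by nlinarith [mul_nonneg (neg_nonneg.2 hb2) hv0] : (0:ℝ) ≤ 1-(1+b*v)) (by linarith : (0:ℝ) ≤ 2*u-1)),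
        mul_nonneg (mul_nonneg (neg_nonneg.2 ha2) (mul_nonneg hu1' hv1')) (mul_nonneg hbv (by linarith : (0:ℝ) ≤ -(1+b*u))),
        mul_nonneg (mul_nonneg (by linarith : (0:ℝ) ≤ 1+a) (mul_nonneg hu1' hv1')) (mul_nonneg hbv (by linarith : (0:ℝ) ≤ -(1+b*u)))]
    have hkey : u*v*((1-u)*(1-v)*(2*u-1)) ≤ 1 - u*v := by
      nlinarith [mul_nonneg (mul_nonneg (mul_nonneg hu0 hv0) hv1') (by linarith : (0:ℝ) ≤ 2*u-1),
        mul_nonneg (mul_nonneg (mul_nonneg hu0 hv0) hv1') (mul_nonneg hu1' (by linarith : (0:ℝ) ≤ 2*u-1)),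
        mul_nonneg hu1' (mul_nonneg hv0 (by linarith : (0:ℝ) ≤ 2*u-1))]
    nlinarith [mul_nonneg hu0 hv0, mul_le_mul_of_nonneg_left hT (mul_nonneg hu0 hv0)]
  · have hP : 0 ≤ (1-u)*(1-v)*((1+b*u)*(1+b*v)) := by
      apply mul_nonneg (mul_nonneg hu1' hv1')
      nlinarith
    nlinarith [mul_nonneg hu0 hv0, mul_nonpos_of_nonpos_of_nonneg ha2 hP,
      mul_nonneg (mul_nonneg hu0 hv0) (mul_nonneg (neg_nonneg.2 ha2) hP)]
end

section
/- Spearman's rho of the copula C(u,v;a,b) = uv[1 + a(1-u)(1-v)(1+bu)(1+bv)], given by ρ = 12·∫₀¹∫₀¹ C(u,v;a,b) du dv − 3, equals a(2+b)²/12. -/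
lemma int_cubic (c0 c1 c2 c3 : ℝ) :
    ∫ x in (0:ℝ)..1, (c0 + c1*x + c2*x^2 + c3*x^3) = c0 + c1/2 + c2/3 + c3/4 := by
  have h0 : IntervalIntegrable (fun _ : ℝ => c0) MeasureTheory.volume 0 1 :=
    intervalIntegrable_const
  have h1 : IntervalIntegrable (fun x : ℝ => c1*x) MeasureTheory.volume 0 1 :=
    (by fun_prop : Continuous fun x : ℝ => c1*x).intervalIntegrable _ _
  have h2 : IntervalIntegrable (fun x : ℝ => c2*x^2) MeasureTheory.volume 0 1 :=
    (by fun_prop : Continuous fun x : ℝ => c2*x^2).intervalIntegrable _ _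
  have h3 : IntervalIntegrable (fun x : ℝ => c3*x^3) MeasureTheory.volume 0 1 :=
    (by fun_prop : Continuous fun x : ℝ => c3*x^3).intervalIntegrable _ _
  rw [intervalIntegral.integral_add ((h0.add h1).add h2) h3,
      intervalIntegral.integral_add (h0.add h1) h2,
      intervalIntegral.integral_add h0 h1,
      intervalIntegral.integral_const_mul, intervalIntegral.integral_const_mul,
      intervalIntegral.integral_const_mul]
  simp [integral_pow]
  ring

theorem spearman_rho (a b : ℝ) :
    12 * (∫ u in (0:ℝ)..1, ∫ v in (0:ℝ)..1,
        u * v * (1 + a * (1 - u) * (1 - v) * (1 + b * u) * (1 + b * v))) - 3 =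
      a * (2 + b) ^ 2 / 12 := by
  have hin : ∀ u : ℝ, (∫ v in (0:ℝ)..1,
      u * v * (1 + a * (1 - u) * (1 - v) * (1 + b * u) * (1 + b * v)))
      = u/2 + a*u*(1-u)*(1+b*u)*(2+b)/12 := by
    intro u
    have : (∫ v in (0:ℝ)..1,
        u * v * (1 + a * (1 - u) * (1 - v) * (1 + b * u) * (1 + b * v)))
        = ∫ v in (0:ℝ)..1, ((0:ℝ) + (u + a*u*(1-u)*(1+b*u))*v
          + (a*u*(1-u)*(1+b*u)*(b-1))*v^2 + (-(a*u*(1-u)*(1+b*u)*b))*v^3) := by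
      apply intervalIntegral.integral_congr
      intro v _
      ring
    rw [this, int_cubic]
    ring
  have : (∫ u in (0:ℝ)..1, ∫ v in (0:ℝ)..1,
      u * v * (1 + a * (1 - u) * (1 - v) * (1 + b * u) * (1 + b * v)))
      = ∫ u in (0:ℝ)..1, ((0:ℝ) + (1/2 + a*(2+b)/12)*u
        + (a*(2+b)/12*(b-1))*u^2 + (-(a*(2+b)/12*b))*u^3) := by
    apply intervalIntegral.integral_congr
    intro u _
    beta_reduce
    rw [hin u]
    ring
  rw [this, int_cubic]
  ring
end

section
/- Kendall's tau of the copula C(u,v;a,b) = uv[1 + a(1-u)(1-v)(1+bu)(1+bv)], given by τ = 4·∫₀¹∫₀¹ C(u,v;a,b)·c(u,v;a,b) du dv − 1 where c is the copula density, equals a(2+b)²/18. -/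
open MeasureTheory intervalIntegral
set_option maxHeartbeats 2000000

lemma poly_int5 (c0 c1 c2 c3 c4 c5 : ℝ) :
    (∫ x in (0:ℝ)..1, (c0 + c1*x + c2*x^2 + c3*x^3 + c4*x^4 + c5*x^5)) =
      c0 + c1/2 + c2/3 + c3/4 + c4/5 + c5/6 := by
  rw [intervalIntegral.integral_add (by apply Continuous.intervalIntegrable; continuity) (by apply Continuous.intervalIntegrable; continuity),
      intervalIntegral.integral_add (by apply Continuous.intervalIntegrable; continuity) (by apply Continuous.intervalIntegrable; continuity),
      intervalIntegral.integral_add (by apply Continuous.intervalIntegrable; continuity) (by apply Continuous.intervalIntegrable; continuity),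
      intervalIntegral.integral_add (by apply Continuous.intervalIntegrable; continuity) (by apply Continuous.intervalIntegrable; continuity),
      intervalIntegral.integral_add (by apply Continuous.intervalIntegrable; continuity) (by apply Continuous.intervalIntegrable; continuity)]
  have hid : (∫ x in (0:ℝ)..1, c1 * x) = c1 / 2 := by
    rw [intervalIntegral.integral_const_mul, integral_id]; ring
  simp [intervalIntegral.integral_const_mul, integral_pow, integral_id, hid]
  ring

theorem kendall_tau (a b : ℝ) :
    4 * (∫ u in (0:ℝ)..1, ∫ v in (0:ℝ)..1,
        (u * v * (1 + a * (1 - u) * (1 - v) * (1 + b * u) * (1 + b * v))) *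
          (1 + a * (3 * b * u ^ 2 + 2 * u * (1 - b) - 1) *
            (3 * b * v ^ 2 + 2 * v * (1 - b) - 1))) - 1 =
      a * (2 + b) ^ 2 / 18 := by
  have inner : ∀ u : ℝ, (∫ v in (0:ℝ)..1,
      (u * v * (1 + a * (1 - u) * (1 - v) * (1 + b * u) * (1 + b * v))) *
        (1 + a * (3 * b * u ^ 2 + 2 * u * (1 - b) - 1) *
          (3 * b * v ^ 2 + 2 * v * (1 - b) - 1))) =
      (0:ℝ) + ((1:ℝ)/2)*u + (((1:ℝ)/6)*a + ((-1:ℝ)/12)*a*b + ((-1:ℝ)/12)*a*b^2)*u^2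
        + (((1:ℝ)/3)*a*b + ((1:ℝ)/6)*a*b^2)*u^3 + (0:ℝ)*u^4 + (0:ℝ)*u^5 := by
    intro u
    have h : (∫ v in (0:ℝ)..1,
        (u * v * (1 + a * (1 - u) * (1 - v) * (1 + b * u) * (1 + b * v))) *
          (1 + a * (3 * b * u ^ 2 + 2 * u * (1 - b) - 1) *
            (3 * b * v ^ 2 + 2 * v * (1 - b) - 1))) =
        ∫ v in (0:ℝ)..1, (((0:ℝ))
          + ((1:ℝ)*u + (2:ℝ)*a*u + (-3:ℝ)*a*u^2 + (3:ℝ)*a*b*u^2 + (-4:ℝ)*a*b*u^3 + (1:ℝ)*a^2*u + (-3:ℝ)*a^2*u^2 + (2:ℝ)*a^2*u^3 + (3:ℝ)*a^2*b*u^2 + (-8:ℝ)*a^2*b*u^3 + (5:ℝ)*a^2*b*u^4 + (2:ℝ)*a^2*b^2*u^3 + (-5:ℝ)*a^2*b^2*u^4 + (3:ℝ)*a^2*b^2*u^5)*v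
          + ((-3:ℝ)*a*u + (5:ℝ)*a*u^2 + (3:ℝ)*a*b*u + (-10:ℝ)*a*b*u^2 + (7:ℝ)*a*b*u^3 + (5:ℝ)*a*b^2*u^2 + (-7:ℝ)*a*b^2*u^3 + (-3:ℝ)*a^2*u + (9:ℝ)*a^2*u^2 + (-6:ℝ)*a^2*u^3 + (3:ℝ)*a^2*b*u + (-18:ℝ)*a^2*b*u^2 + (30:ℝ)*a^2*b*u^3 + (-15:ℝ)*a^2*b*u^4 + (9:ℝ)*a^2*b^2*u^2 + (-30:ℝ)*a^2*b^2*u^3 + (30:ℝ)*a^2*b^2*u^4 + (-9:ℝ)*a^2*b^2*u^5 + (6:ℝ)*a^2*b^3*u^3 + (-15:ℝ)*a^2*b^3*u^4 + (9:ℝ)*a^2*b^3*u^5)*v^2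
          + ((-4:ℝ)*a*b*u + (7:ℝ)*a*b*u^2 + (-7:ℝ)*a*b^2*u^2 + (10:ℝ)*a*b^2*u^3 + (2:ℝ)*a^2*u + (-6:ℝ)*a^2*u^2 + (4:ℝ)*a^2*u^3 + (-8:ℝ)*a^2*b*u + (30:ℝ)*a^2*b*u^2 + (-32:ℝ)*a^2*b*u^3 + (10:ℝ)*a^2*b*u^4 + (2:ℝ)*a^2*b^2*u + (-30:ℝ)*a^2*b^2*u^2 + (72:ℝ)*a^2*b^2*u^3 + (-50:ℝ)*a^2*b^2*u^4 + (6:ℝ)*a^2*b^2*u^5 + (6:ℝ)*a^2*b^3*u^2 + (-32:ℝ)*a^2*b^3*u^3 + (50:ℝ)*a^2*b^3*u^4 + (-24:ℝ)*a^2*b^3*u^5 + (4:ℝ)*a^2*b^4*u^3 + (-10:ℝ)*a^2*b^4*u^4 + (6:ℝ)*a^2*b^4*u^5)*v^3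
          + ((5:ℝ)*a^2*b*u + (-15:ℝ)*a^2*b*u^2 + (10:ℝ)*a^2*b*u^3 + (-5:ℝ)*a^2*b^2*u + (30:ℝ)*a^2*b^2*u^2 + (-50:ℝ)*a^2*b^2*u^3 + (25:ℝ)*a^2*b^2*u^4 + (-15:ℝ)*a^2*b^3*u^2 + (50:ℝ)*a^2*b^3*u^3 + (-50:ℝ)*a^2*b^3*u^4 + (15:ℝ)*a^2*b^3*u^5 + (-10:ℝ)*a^2*b^4*u^3 + (25:ℝ)*a^2*b^4*u^4 + (-15:ℝ)*a^2*b^4*u^5)*v^4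
          + ((3:ℝ)*a^2*b^2*u + (-9:ℝ)*a^2*b^2*u^2 + (6:ℝ)*a^2*b^2*u^3 + (9:ℝ)*a^2*b^3*u^2 + (-24:ℝ)*a^2*b^3*u^3 + (15:ℝ)*a^2*b^3*u^4 + (6:ℝ)*a^2*b^4*u^3 + (-15:ℝ)*a^2*b^4*u^4 + (9:ℝ)*a^2*b^4*u^5)*v^5) := by
      apply intervalIntegral.integral_congr
      intro v _
      ring
    rw [h, poly_int5]
    ring
  have h2 : (∫ u in (0:ℝ)..1, ∫ v in (0:ℝ)..1,
      (u * v * (1 + a * (1 - u) * (1 - v) * (1 + b * u) * (1 + b * v))) *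
        (1 + a * (3 * b * u ^ 2 + 2 * u * (1 - b) - 1) *
          (3 * b * v ^ 2 + 2 * v * (1 - b) - 1))) =
      ∫ u in (0:ℝ)..1, ((0:ℝ) + ((1:ℝ)/2)*u
        + (((1:ℝ)/6)*a + ((-1:ℝ)/12)*a*b + ((-1:ℝ)/12)*a*b^2)*u^2
        + (((1:ℝ)/3)*a*b + ((1:ℝ)/6)*a*b^2)*u^3 + (0:ℝ)*u^4 + (0:ℝ)*u^5) := by
    apply intervalIntegral.integral_congr
    intro u _
    exact inner u
  rw [h2, poly_int5]
  ring
end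

section
/- Over the region Ω⁺ = {(a,b) : 0 ≤ b ≤ 1, -1/(1+b)² ≤ a ≤ 1/(1+b)} ∪ {(a,b) : b > 1, -1/(1+b)² ≤ a ≤ 1/(1+b)²}, the maximum of ρ(a,b) = a(2+b)²/12 equals 3/8, attained at b = 1, a = 1/2. -/
theorem rho_max_pos :
    IsGreatest {ρ : ℝ | ∃ a b : ℝ,
        ((0 ≤ b ∧ b ≤ 1 ∧ -1 / (1 + b) ^ 2 ≤ a ∧ a ≤ 1 / (1 + b)) ∨
         (1 < b ∧ -1 / (1 + b) ^ 2 ≤ a ∧ a ≤ 1 / (1 + b) ^ 2)) ∧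
        ρ = a * (2 + b) ^ 2 / 12} (3 / 8) ∧
    (1 / 2 : ℝ) * (2 + 1) ^ 2 / 12 = 3 / 8 := by
  constructor
  · constructor
    · exact ⟨1/2, 1, Or.inl ⟨by norm_num, by norm_num, by norm_num, by norm_num⟩, by norm_num⟩
    · rintro ρ ⟨a, b, h, rfl⟩
      rcases h with ⟨hb0, hb1, -, ha⟩ | ⟨hb1, -, ha⟩
      · have h1 : (0:ℝ) < 1 + b := by linarith
        rw [le_div_iff₀ h1] at ha
        nlinarith [sq_nonneg (b - 1), sq_nonneg (2 + b), mul_pos h1 h1]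
      · have h1 : (0:ℝ) < (1 + b) ^ 2 := by positivity
        rw [le_div_iff₀ h1] at ha
        nlinarith [sq_nonneg (2 + b), sq_nonneg b]
  · norm_num
end

section
/- If b > 1 and -1/(1+b)² ≤ a ≤ 1/(1+b)², then for all u, v ∈ [0,1], the density c(u,v;a,b) = 1 + a·(3bu²+2u(1-b)-1)(3bv²+2v(1-b)-1) is nonnegative and C(u,v;a,b) = uv[1 + a(1-u)(1-v)(1+bu)(1+bv)] ≤ 1. -/
set_option maxHeartbeats 1600000 in
theorem b_gt_one_admissible (a b : ℝ) (hb : 1 < b)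
    (ha1 : -1 / (1 + b) ^ 2 ≤ a) (ha2 : a ≤ 1 / (1 + b) ^ 2) :
    ∀ u ∈ Set.Icc (0:ℝ) 1, ∀ v ∈ Set.Icc (0:ℝ) 1,
      0 ≤ 1 + a * (3 * b * u ^ 2 + 2 * u * (1 - b) - 1) *
            (3 * b * v ^ 2 + 2 * v * (1 - b) - 1) ∧
      u * v * (1 + a * (1 - u) * (1 - v) * (1 + b * u) * (1 + b * v)) ≤ 1 := by
  intro u hu v hv
  obtain ⟨hu0, hu1⟩ := hu
  obtain ⟨hv0, hv1⟩ := hv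
  have hb0 : (0:ℝ) < b := by linarith
  have hbsq : (0:ℝ) < (1 + b) ^ 2 := by positivity
  have ha1' : -1 ≤ a * (1 + b) ^ 2 := by
    have := (div_le_iff₀ hbsq).mp ha1
    linarith
  have ha2' : a * (1 + b) ^ 2 ≤ 1 := by
    have := (le_div_iff₀ hbsq).mp ha2
    linarith
  -- bounds on g(x) = 3bx² + 2x(1-b) - 1
  have hgu1 : 3 * b * u ^ 2 + 2 * u * (1 - b) - 1 ≤ 1 + b := by
    nlinarith [mul_nonneg (sub_nonneg.2 hu1) (by nlinarith : (0:ℝ) ≤ 3 * b * u + b + 2)]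
  have hgu2 : -(1 + b) ≤ 3 * b * u ^ 2 + 2 * u * (1 - b) - 1 := by
    nlinarith [sq_nonneg (3 * b * u - (b - 1))]
  have hgv1 : 3 * b * v ^ 2 + 2 * v * (1 - b) - 1 ≤ 1 + b := by
    nlinarith [mul_nonneg (sub_nonneg.2 hv1) (by nlinarith : (0:ℝ) ≤ 3 * b * v + b + 2)]
  have hgv2 : -(1 + b) ≤ 3 * b * v ^ 2 + 2 * v * (1 - b) - 1 := by
    nlinarith [sq_nonneg (3 * b * v - (b - 1))]
  constructor
  · set P := 3 * b * u ^ 2 + 2 * u * (1 - b) - 1 with hP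
    set Q := 3 * b * v ^ 2 + 2 * v * (1 - b) - 1 with hQ
    have h1 : 0 ≤ ((1 + b) - P) * ((1 + b) - Q) := mul_nonneg (by linarith) (by linarith)
    have h2 : 0 ≤ ((1 + b) + P) * ((1 + b) + Q) := mul_nonneg (by linarith) (by linarith)
    have h3 : 0 ≤ ((1 + b) - P) * ((1 + b) + Q) := mul_nonneg (by linarith) (by linarith)
    have h4 : 0 ≤ ((1 + b) + P) * ((1 + b) - Q) := mul_nonneg (by linarith) (by linarith)
    rcases le_or_gt 0 a with ha | ha
    · -- a ≥ 0 : need P*Q ≥ -(1+b)², then a*P*Q ≥ -a(1+b)² ≥ -1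
      have hPQ : -(1 + b) ^ 2 ≤ P * Q := by nlinarith
      nlinarith [mul_le_mul_of_nonneg_left hPQ ha]
    · have hPQ : P * Q ≤ (1 + b) ^ 2 := by nlinarith
      nlinarith [mul_le_mul_of_nonpos_left hPQ ha.le]
  · have h1u : (0:ℝ) ≤ 1 - u := by linarith
    have h1v : (0:ℝ) ≤ 1 - v := by linarith
    have hw : 0 ≤ (1 - u) * (1 - v) := mul_nonneg h1u h1v
    have huv1 : u * v ≤ 1 := by nlinarith [mul_nonneg hu0 h1v]
    have hz : (1 + b * u) * (1 + b * v) ≤ (1 + b) ^ 2 := by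
      nlinarith [mul_nonneg hb0.le h1u, mul_nonneg hb0.le h1v,
        mul_nonneg (mul_nonneg hb0.le hb0.le) (by linarith : (0:ℝ) ≤ 1 - u * v)]
    have hk : a * (1 - u) * (1 - v) * (1 + b * u) * (1 + b * v) ≤ (1 - u) * (1 - v) := by
      rcases le_or_gt 0 a with ha | ha
      · have h1 : a * ((1 + b * u) * (1 + b * v)) ≤ 1 := by
          calc a * ((1 + b * u) * (1 + b * v)) ≤ a * (1 + b) ^ 2 :=
                mul_le_mul_of_nonneg_left hz ha
            _ ≤ 1 := ha2'
        have := mul_le_mul_of_nonneg_right h1 hw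
        nlinarith
      · have hz0 : 0 ≤ (1 + b * u) * (1 + b * v) :=
          mul_nonneg (by nlinarith [mul_nonneg hb0.le hu0])
            (by nlinarith [mul_nonneg hb0.le hv0])
        have : a * ((1 - u) * (1 - v) * ((1 + b * u) * (1 + b * v))) ≤ 0 :=
          mul_nonpos_of_nonpos_of_nonneg ha.le (mul_nonneg hw hz0)
        nlinarith
    have huv0 : 0 ≤ u * v := mul_nonneg hu0 hv0
    have hmain : u * v * (a * (1 - u) * (1 - v) * (1 + b * u) * (1 + b * v)) ≤
        u * v * ((1 - u) * (1 - v)) := mul_le_mul_of_nonneg_left hk huv0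
    nlinarith [mul_nonneg (mul_nonneg h1u h1v) (by nlinarith : (0:ℝ) ≤ 1 - u * v),
      mul_nonneg (mul_nonneg hu0 h1v) (le_refl (0:ℝ)), mul_nonneg hu0 h1v, mul_nonneg hv0 h1u]
end

section
/- If -2 ≤ b ≤ 0, -1 ≤ a ≤ 0, and u₁ ≤ u₂, v₁ ≤ v₂ with all in [0,1], then C(u₂,v₂;a,b) − C(u₂,v₁;a,b) − C(u₁,v₂;a,b) + C(u₁,v₁;a,b) ≥ 0, where C(u,v;a,b) = uv[1 + a(1-u)(1-v)(1+bu)(1+bv)]. -/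
lemma gbound (b x y : ℝ) (hb1 : -2 ≤ b) (hb2 : b ≤ 0)
    (hx0 : 0 ≤ x) (hxy : x ≤ y) (hy1 : y ≤ 1) :
    -1 ≤ 1 - (x + y) + b * ((x + y) - (x^2 + x*y + y^2)) ∧
    1 - (x + y) + b * ((x + y) - (x^2 + x*y + y^2)) ≤ 1 := by
  constructor
  · rcases le_or_gt (x^2 + x*y + y^2) (x + y) with h | h
    · nlinarith [sq_nonneg (x + y - 1), sq_nonneg (x - y)]
    · nlinarith [sq_nonneg (x + y - 1), sq_nonneg (x - y)]
  · rcases le_or_gt (x^2 + x*y + y^2) (x + y) with h | h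
    · nlinarith [mul_nonneg hx0 (le_trans hx0 hxy)]
    · nlinarith [mul_nonneg hx0 (le_trans hx0 hxy)]

theorem two_increasing_neg (a b : ℝ) (hb1 : -2 ≤ b) (hb2 : b ≤ 0)
    (ha1 : -1 ≤ a) (ha2 : a ≤ 0)
    (u₁ u₂ v₁ v₂ : ℝ) (hu₁ : u₁ ∈ Set.Icc (0:ℝ) 1) (hu₂ : u₂ ∈ Set.Icc (0:ℝ) 1)
    (hv₁ : v₁ ∈ Set.Icc (0:ℝ) 1) (hv₂ : v₂ ∈ Set.Icc (0:ℝ) 1)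
    (hu : u₁ ≤ u₂) (hv : v₁ ≤ v₂) :
    0 ≤ u₂ * v₂ * (1 + a * (1 - u₂) * (1 - v₂) * (1 + b * u₂) * (1 + b * v₂))
      - u₂ * v₁ * (1 + a * (1 - u₂) * (1 - v₁) * (1 + b * u₂) * (1 + b * v₁))
      - u₁ * v₂ * (1 + a * (1 - u₁) * (1 - v₂) * (1 + b * u₁) * (1 + b * v₂))
      + u₁ * v₁ * (1 + a * (1 - u₁) * (1 - v₁) * (1 + b * u₁) * (1 + b * v₁)) := by
  obtain ⟨hu10, hu11⟩ := hu₁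
  obtain ⟨hu20, hu21⟩ := hu₂
  obtain ⟨hv10, hv11⟩ := hv₁
  obtain ⟨hv20, hv21⟩ := hv₂
  set gu := 1 - (u₁ + u₂) + b * ((u₁ + u₂) - (u₁^2 + u₁*u₂ + u₂^2)) with hgu
  set gv := 1 - (v₁ + v₂) + b * ((v₁ + v₂) - (v₁^2 + v₁*v₂ + v₂^2)) with hgv
  obtain ⟨hgu1, hgu2⟩ := gbound b u₁ u₂ hb1 hb2 hu10 hu hu21
  obtain ⟨hgv1, hgv2⟩ := gbound b v₁ v₂ hb1 hb2 hv10 hv hv21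
  have key : 0 ≤ 1 + a * gu * gv := by
    nlinarith [mul_nonneg (by linarith : (0:ℝ) ≤ 1 + gu) (by linarith : (0:ℝ) ≤ 1 + gv),
      mul_nonneg (by linarith : (0:ℝ) ≤ 1 - gu) (by linarith : (0:ℝ) ≤ 1 - gv),
      mul_nonneg (by linarith : (0:ℝ) ≤ 1 + gu) (by linarith : (0:ℝ) ≤ 1 - gv),
      mul_nonneg (by linarith : (0:ℝ) ≤ 1 - gu) (by linarith : (0:ℝ) ≤ 1 + gv)]
  have heq : u₂ * v₂ * (1 + a * (1 - u₂) * (1 - v₂) * (1 + b * u₂) * (1 + b * v₂))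
      - u₂ * v₁ * (1 + a * (1 - u₂) * (1 - v₁) * (1 + b * u₂) * (1 + b * v₁))
      - u₁ * v₂ * (1 + a * (1 - u₁) * (1 - v₂) * (1 + b * u₁) * (1 + b * v₂))
      + u₁ * v₁ * (1 + a * (1 - u₁) * (1 - v₁) * (1 + b * u₁) * (1 + b * v₁))
      = (u₂ - u₁) * (v₂ - v₁) * (1 + a * gu * gv) := by
    rw [hgu, hgv]; ring
  rw [heq]
  exact mul_nonneg (mul_nonneg (by linarith) (by linarith)) key
end

section
/- For b with -2 ≤ b ≤ 0 and a with -1 ≤ a ≤ 0, the density c(u,v;a,b) = 1 + a·f(u,b)·f(v,b) with f(u,b) = 3bu² + 2u(1-b) - 1 is nonnegative for all u, v ∈ [0,1]. -/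
lemma f_bounds (b u : ℝ) (hb1 : -2 ≤ b) (hb2 : b ≤ 0)
    (hu0 : 0 ≤ u) (hu1 : u ≤ 1) :
    -1 ≤ 3 * b * u ^ 2 + 2 * u * (1 - b) - 1 ∧
    3 * b * u ^ 2 + 2 * u * (1 - b) - 1 ≤ 1 := by
  constructor
  · nlinarith [mul_nonneg hu0 (by nlinarith : (0:ℝ) ≤ 3*b*u + 2*(1-b))]
  · nlinarith [sq_nonneg (3*b*u + (1-b)), sq_nonneg (b+2), mul_nonneg hu0 (sub_nonneg.2 hu1), mul_nonneg (mul_nonneg hu0 (sub_nonneg.2 hu1)) (neg_nonneg.2 hb2), sq_nonneg (1-u), sq_nonneg u]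

theorem density_nonneg_neg (a b : ℝ) (hb1 : -2 ≤ b) (hb2 : b ≤ 0)
    (ha1 : -1 ≤ a) (ha2 : a ≤ 0) :
    ∀ u ∈ Set.Icc (0:ℝ) 1, ∀ v ∈ Set.Icc (0:ℝ) 1,
      0 ≤ 1 + a * (3 * b * u ^ 2 + 2 * u * (1 - b) - 1) *
        (3 * b * v ^ 2 + 2 * v * (1 - b) - 1) := by
  intro u hu v hv
  obtain ⟨hu0, hu1⟩ := hu
  obtain ⟨hv0, hv1⟩ := hv
  obtain ⟨hfu1, hfu2⟩ := f_bounds b u hb1 hb2 hu0 hu1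
  obtain ⟨hfv1, hfv2⟩ := f_bounds b v hb1 hb2 hv0 hv1
  set fu := 3 * b * u ^ 2 + 2 * u * (1 - b) - 1
  set fv := 3 * b * v ^ 2 + 2 * v * (1 - b) - 1
  rcases le_or_gt 0 (fu * fv) with h | h
  · nlinarith [mul_nonneg (by linarith : (0:ℝ) ≤ 1 + fu) (by linarith : (0:ℝ) ≤ 1 + fv), mul_nonneg (by linarith : (0:ℝ) ≤ 1 - fu) (by linarith : (0:ℝ) ≤ 1 - fv)]
  · nlinarith [mul_nonneg (neg_nonneg.2 ha2) (le_of_lt (neg_pos.2 h))]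
end
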